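/- arXiv:1104.3900 — 2 statements merged into one kernel-verified Lean document; each statement's English description precedes it below -/
import Mathlib

section
/- Fix n ≥ 2 and consider the simple graph whose vertex set is {x ∈ ℤ^n : F_n(x) = 0}, with two solutions adjacent if and only if they differ in exactly one coordinate. This graph is acyclic (i.e., it contains no cycles; every connected component is a tree). -/
open Finset

def F {n : ℕ} (x : Fin n → ℤ) : ℤ :=
  (∑ i, x i) ^ 2 - (∑ i, x i) - 4 * ∑ i, ∑ j, if i < j then x i * x j else 0

/-- The graph on the integral solutions of `F_n = 0`, two solutions being adjacent
iff they differ in exactly one coordinate. -/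
def solGraph (n : ℕ) : SimpleGraph {x : Fin n → ℤ // F x = 0} where
  Adj x y := ∃ k, x.1 k ≠ y.1 k ∧ ∀ i, i ≠ k → x.1 i = y.1 i
  symm := by
    constructor
    rintro x y ⟨k, hk, h⟩
    exact ⟨k, hk.symm, fun i hi => (h i hi).symm⟩
  loopless := by
    constructor
    rintro x ⟨k, hk, -⟩
    exact hk rfl

/-!
Since `4 F(x) = 8 ∑ xᵢ² + 1 - t²` with `t = 2 ∑ xᵢ + 1`, the neighbour of a solution `x` in
direction `k` is its Vieta flip, with `k`-th coordinate `t - 3 xₖ`. We use `∑ xᵢ²` as a potential.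
It changes along every edge, since `t` is odd. A flip in direction `k` lowers it only if
`t² < 16 xₖ²`, so two lowering flips in distinct directions `k ≠ l` would give
`t² < 8 (xₖ² + xₗ²) ≤ 8 ∑ xᵢ² < t²`. Hence every solution has at most one lower neighbour, while
the vertex of maximal potential on a cycle would have two.
-/

theorem SimpleGraph.isAcyclic_of_unique_lower_neighbor {V α : Type*} [LinearOrder α]
    {G : SimpleGraph V} (f : V → α) (hne : ∀ ⦃x y⦄, G.Adj x y → f x ≠ f y)
    (hunique : ∀ ⦃x y z⦄, G.Adj x y → G.Adj x z → f y < f x → f z < f x → y = z) :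
    G.IsAcyclic := by
  classical
  intro v c hc
  obtain ⟨u, hu, hmax⟩ := c.support.toFinset.exists_max_image f ⟨v, by simp⟩
  rw [List.mem_toFinset] at hu
  have hc' := hc.rotate hu
  have hlower : ∀ w ∈ (c.rotate u hu).support, G.Adj u w → f w < f u := fun w hw hadj =>
    (hmax w (by simpa using hw)).lt_of_ne (hne hadj).symm
  have hsnd := (c.rotate u hu).adj_snd hc'.not_nil
  have hpen := ((c.rotate u hu).adj_penultimate hc'.not_nil).symm
  exact hc'.snd_ne_penultimate <| hunique hsnd hpen
    (hlower _ (Walk.getVert_mem_support _ _) hsnd) (hlower _ (Walk.getVert_mem_support _ _) hpen)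

theorem sq_sum_eq_sum_sq_add_two_mul_sum_lt {ι R : Type*} [Fintype ι] [LinearOrder ι]
    [CommRing R] (x : ι → R) :
    (∑ i, x i) ^ 2 = ∑ i, x i ^ 2 + 2 * ∑ i, ∑ j, if i < j then x i * x j else 0 := by
  have hsplit : ∀ i j, x i * x j = (if i < j then x i * x j else 0) +
      (if j < i then x j * x i else 0) + if i = j then x i * x j else 0 := by
    intro i j
    rcases lt_trichotomy i j with h | rfl | h
    · simp [h, h.ne, h.not_gt]
    · simp
    · simp [h, h.ne', h.not_gt, mul_comm]
  calc (∑ i, x i) ^ 2 = ∑ i, ∑ j, x i * x j := by rw [sq, sum_mul_sum]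
    _ = _ := by
      rw [sum_congr rfl fun i _ => sum_congr rfl fun j _ => hsplit i j]
      simp only [sum_add_distrib, sum_ite_eq, mem_univ, if_true, ← sq]
      rw [sum_comm (f := fun i j => if j < i then x j * x i else 0)]
      ring

theorem F_eq_zero_iff {n : ℕ} (x : Fin n → ℤ) :
    F x = 0 ↔ 8 * ∑ i, x i ^ 2 + 1 = (2 * ∑ i, x i + 1) ^ 2 := by
  have h4 : 4 * F x = 8 * ∑ i, x i ^ 2 + 1 - (2 * ∑ i, x i + 1) ^ 2 := by
    rw [F]
    linear_combination 8 * sq_sum_eq_sum_sq_add_two_mul_sum_lt x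
  constructor <;> intro h <;> linarith

theorem sum_sub_sum_eq_sub_of_forall_ne {ι M : Type*} [Fintype ι] [AddCommGroup M]
    {f g : ι → M} {k : ι} (h : ∀ i ≠ k, f i = g i) : ∑ i, g i - ∑ i, f i = g k - f k := by
  rw [← sum_sub_distrib, sum_eq_single k fun i _ hi => by rw [h i hi, sub_self]]
  simp

theorem sq_lt_sixteen_mul_sq {R : Type*} [CommRing R] [LinearOrder R] [IsStrictOrderedRing R]
    {t a : R} (h : (t - 3 * a) ^ 2 < a ^ 2) : t ^ 2 < 16 * a ^ 2 := by
  nlinarith [sq_nonneg (t - 4 * a), sq_nonneg (t + 4 * a), sq_nonneg (t - 2 * a)]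

section Flip

variable {n : ℕ} {x y z : Fin n → ℤ} {k l : Fin n}

theorem sum_sq_sub_sum_sq_of_forall_ne (h : ∀ i ≠ k, x i = y i) :
    ∑ i, y i ^ 2 - ∑ i, x i ^ 2 = y k ^ 2 - x k ^ 2 :=
  sum_sub_sum_eq_sub_of_forall_ne (f := fun i => x i ^ 2) (g := fun i => y i ^ 2)
    fun i hi => by rw [h i hi]

theorem eq_two_mul_sum_add_one_sub_three_mul (hx : F x = 0) (hy : F y = 0) (hk : x k ≠ y k)
    (h : ∀ i ≠ k, x i = y i) : y k = 2 * ∑ i, x i + 1 - 3 * x k := by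
  rw [F_eq_zero_iff] at hx hy
  have hs := sum_sub_sum_eq_sub_of_forall_ne h
  have hq := sum_sq_sub_sum_sq_of_forall_ne h
  have : (y k - x k) * (4 * (y k - (2 * ∑ i, x i + 1 - 3 * x k))) = 0 := by
    linear_combination hy - hx - 8 * hq + (4 * (∑ i, y i + ∑ i, x i + 1) + 4 * (y k - x k)) * hs
  simpa [sub_eq_zero, hk.symm] using this

theorem sum_sq_ne_sum_sq_of_forall_ne (hx : F x = 0) (hy : F y = 0) (hk : x k ≠ y k)
    (h : ∀ i ≠ k, x i = y i) : ∑ i, x i ^ 2 ≠ ∑ i, y i ^ 2 := by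
  have hq := sum_sq_sub_sum_sq_of_forall_ne h
  have hflip := eq_two_mul_sum_add_one_sub_three_mul hx hy hk h
  intro heq
  have : (y k - x k) * (y k + x k) = 0 := by linear_combination -heq - hq
  rcases mul_eq_zero.mp this with h0 | h0
  · exact hk (sub_eq_zero.mp h0).symm
  · omega

theorem sq_two_mul_sum_add_one_lt_of_sum_sq_lt (hx : F x = 0) (hy : F y = 0) (hk : x k ≠ y k)
    (h : ∀ i ≠ k, x i = y i) (hlt : ∑ i, y i ^ 2 < ∑ i, x i ^ 2) :
    (2 * ∑ i, x i + 1) ^ 2 < 16 * x k ^ 2 := by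
  have hq := sum_sq_sub_sum_sq_of_forall_ne h
  apply sq_lt_sixteen_mul_sq
  rw [← eq_two_mul_sum_add_one_sub_three_mul hx hy hk h]
  linarith

theorem eq_of_sum_sq_lt (hx : F x = 0) (hy : F y = 0) (hz : F z = 0)
    (hky : x k ≠ y k) (hy' : ∀ i ≠ k, x i = y i) (hlz : x l ≠ z l) (hz' : ∀ i ≠ l, x i = z i)
    (hylt : ∑ i, y i ^ 2 < ∑ i, x i ^ 2) (hzlt : ∑ i, z i ^ 2 < ∑ i, x i ^ 2) : y = z := by
  obtain rfl | hkl := eq_or_ne k l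
  · funext i
    obtain rfl | hi := eq_or_ne i k
    · rw [eq_two_mul_sum_add_one_sub_three_mul hx hy hky hy',
        eq_two_mul_sum_add_one_sub_three_mul hx hz hlz hz']
    · rw [← hy' i hi, hz' i hi]
  · have hpair : x k ^ 2 + x l ^ 2 ≤ ∑ i, x i ^ 2 := by
      rw [← sum_pair (f := fun i => x i ^ 2) hkl]
      exact sum_le_sum_of_subset_of_nonneg (subset_univ _) fun i _ _ => sq_nonneg (x i)
    have hk := sq_two_mul_sum_add_one_lt_of_sum_sq_lt hx hy hky hy' hylt
    have hl := sq_two_mul_sum_add_one_lt_of_sum_sq_lt hx hz hlz hz' hzlt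
    rw [F_eq_zero_iff] at hx
    linarith

end Flip

theorem stmt_6_general (n : ℕ) : (solGraph n).IsAcyclic := by
  refine SimpleGraph.isAcyclic_of_unique_lower_neighbor (fun v => ∑ i, v.1 i ^ 2) ?_ ?_
  · rintro ⟨x, hx⟩ ⟨y, hy⟩ ⟨k, hk, h⟩
    exact sum_sq_ne_sum_sq_of_forall_ne hx hy hk h
  · rintro ⟨x, hx⟩ ⟨y, hy⟩ ⟨z, hz⟩ ⟨k, hky, hy'⟩ ⟨l, hlz, hz'⟩ hylt hzlt
    exact Subtype.ext (eq_of_sum_sq_lt hx hy hz hky hy' hlz hz' hylt hzlt)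

/-- The solution graph of `F_n = 0` is acyclic: every connected component is a tree. -/
theorem stmt_6 (n : ℕ) (hn : 2 ≤ n) : (solGraph n).IsAcyclic :=
  stmt_6_general n
end

section
/- The set C_3 of natural numbers occurring as a coordinate of some 3-color fair game has natural density zero: the quantity #{c ∈ C_3 : c ≤ k}/k tends to 0 as k → ∞. -/
/-!
If `(a, b, c)` is a fair game then `4 (a - b) ^ 2 + 3 = (2 c + 1) (4 (a + b) - 2 c + 3)`, so every
prime `p ∣ 2 c + 1` has `-3` as a square, hence a primitive cube root of unity, modulo `p`; thus
`p ≢ 2 (mod 3)`. So `2 c + 1` is coprime to the product `M` of any finite set of primes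
`≡ 2 (mod 3)`, which confines `C₃` to a set of upper density at most
`2 φ(M) / M ≤ 2 exp (-∑ 1 / p)`. By Dirichlet's theorem in its analytic form, `∑ 1 / p` over the
primes `p ≡ 2 (mod 3)` diverges, so this bound can be made arbitrarily small.
-/

open Finset Filter

def C3 : Set ℕ :=
  {c : ℕ | ∃ x : Fin 3 → ℤ, F x = 0 ∧ (∀ i, 0 ≤ x i) ∧ ∃ i, x i = (c : ℤ)}

theorem ZMod.natCast_ne_two_of_sq_add_add_one_eq_zero {p : ℕ} [Fact p.Prime] {ω : ZMod p}
    (h : ω ^ 2 + ω + 1 = 0) : (p : ZMod 3) ≠ 2 := by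
  by_cases hp3 : p = 3
  · subst hp3; decide
  have hω1 : ω ≠ 1 := by
    rintro rfl
    have h3 : ((3 : ℕ) : ZMod p) = 0 := by push_cast; linear_combination h
    rw [ZMod.natCast_eq_zero_iff, Nat.prime_dvd_prime_iff_eq Fact.out Nat.prime_three] at h3
    exact hp3 h3
  have hω0 : ω ≠ 0 := by
    rintro rfl
    simp at h
  have hord : orderOf ω = 3 := orderOf_eq_prime (by linear_combination (ω - 1) * h) hω1
  have hdvd : 3 ∣ p - 1 := hord ▸ ZMod.orderOf_dvd_card_sub_one hω0
  have hp1 : p % 3 = 1 % 3 := by have := (Fact.out : p.Prime).one_le; omega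
  rw [← ZMod.natCast_eq_natCast_iff'] at hp1
  rw [hp1]
  decide

theorem Nat.Prime.natCast_ne_two_of_dvd_four_mul_sq_add_three {p : ℕ} (hp : p.Prime) {m : ℤ}
    (h : (p : ℤ) ∣ 4 * m ^ 2 + 3) : (p : ZMod 3) ≠ 2 := by
  have := Fact.mk hp
  have hp2 : p ≠ 2 := by
    rintro rfl
    omega
  have h2 : (2 : ZMod p) * 2⁻¹ = 1 := by
    refine mul_inv_cancel₀ fun h2 ↦ hp2 ?_
    rw [show (2 : ZMod p) = ((2 : ℕ) : ZMod p) by norm_cast, ZMod.natCast_eq_zero_iff,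
      Nat.prime_dvd_prime_iff_eq hp Nat.prime_two] at h2
    exact h2
  have h0 : (4 * m ^ 2 + 3 : ZMod p) = 0 := by
    exact_mod_cast (ZMod.intCast_zmod_eq_zero_iff_dvd _ p).2 h
  -- `(m - 1/2) ^ 2 + (m - 1/2) + 1 = (4 m ^ 2 + 3) / 4`
  refine ZMod.natCast_ne_two_of_sq_add_add_one_eq_zero (ω := (m : ZMod p) - 2⁻¹) ?_
  linear_combination (2⁻¹ : ZMod p) ^ 2 * h0 -
    ((m : ZMod p) ^ 2 * (1 + 2 * 2⁻¹) + m + 1 + 2⁻¹) * h2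

theorem F_fin_three (x : Fin 3 → ℤ) :
    F x = (x 0 + x 1 + x 2) ^ 2 - (x 0 + x 1 + x 2) - 4 * (x 0 * x 1 + x 1 * x 2 + x 2 * x 0) := by
  simp [F, Fin.sum_univ_three]
  ring

theorem dvd_four_mul_sq_add_three {a b c : ℤ}
    (h : (a + b + c) ^ 2 - (a + b + c) - 4 * (a * b + b * c + c * a) = 0) :
    2 * c + 1 ∣ 4 * (a - b) ^ 2 + 3 :=
  Dvd.intro (4 * (a + b) - 2 * c + 3) (by linear_combination -4 * h)

theorem exists_dvd_four_mul_sq_add_three_of_F_eq_zero {x : Fin 3 → ℤ} (h : F x = 0) (i : Fin 3) :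
    ∃ m, 2 * x i + 1 ∣ 4 * m ^ 2 + 3 := by
  rw [F_fin_three] at h
  fin_cases i <;> simp only [Fin.zero_eta, Fin.mk_one, Fin.reduceFinMk]
  · exact ⟨_, dvd_four_mul_sq_add_three (a := x 1) (b := x 2) (by linear_combination h)⟩
  · exact ⟨_, dvd_four_mul_sq_add_three (a := x 0) (b := x 2) (by linear_combination h)⟩
  · exact ⟨_, dvd_four_mul_sq_add_three (a := x 0) (b := x 1) (by linear_combination h)⟩

theorem natCast_ne_two_of_mem_C3 {c : ℕ} (hc : c ∈ C3) {p : ℕ} (hp : p.Prime)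
    (hpc : p ∣ 2 * c + 1) : (p : ZMod 3) ≠ 2 := by
  obtain ⟨x, hx, -, i, hxi⟩ := hc
  obtain ⟨m, hm⟩ := exists_dvd_four_mul_sq_add_three_of_F_eq_zero hx i
  rw [hxi] at hm
  exact hp.natCast_ne_two_of_dvd_four_mul_sq_add_three
    ((Int.natCast_dvd_natCast.2 hpc).trans (mod_cast hm))

theorem ncard_C3_le {P : Finset ℕ} (hP : ∀ p ∈ P, p.Prime ∧ (p : ZMod 3) = 2) (k : ℕ) :
    {c ∈ C3 | c ≤ k}.ncard ≤ (∏ p ∈ P, p).totient * ((2 * k + 2) / ∏ p ∈ P, p + 1) := by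
  have hM : ∏ p ∈ P, p ≠ 0 := prod_ne_zero_iff.2 fun p hp ↦ (hP p hp).1.ne_zero
  calc {c ∈ C3 | c ≤ k}.ncard
      ≤ (↑{y ∈ Ico 0 (0 + (2 * k + 2)) | (∏ p ∈ P, p).Coprime y} : Set ℕ).ncard := by
        refine Set.ncard_le_ncard_of_injOn (fun c ↦ 2 * c + 1) (fun c ⟨hc, hck⟩ ↦ ?_)
          (fun c _ d _ h ↦ by simpa using h)
        simp only [coe_filter, mem_Ico, Set.mem_ofPred_eq]
        refine ⟨by omega, Nat.Coprime.prod_left fun p hp ↦ ?_⟩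
        exact (hP p hp).1.coprime_iff_not_dvd.2
          fun hpc ↦ natCast_ne_two_of_mem_C3 hc (hP p hp).1 hpc (hP p hp).2
    _ ≤ _ := by
        rw [Set.ncard_coe_finset]
        exact Nat.Ico_filter_coprime_le 0 _ hM

theorem tendsto_div_atTop_zero_of_le_mul_add {u : ℕ → ℝ} (hu : ∀ k, 0 ≤ u k)
    (h : ∀ ε > 0, ∃ B, ∀ k, u k ≤ ε * k + B) : Tendsto (fun k ↦ u k / k) atTop (nhds 0) := by
  refine tendsto_order.2 ⟨fun a ha ↦ .of_forall fun k ↦ ha.trans_le (by have := hu k; positivity),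
    fun a ha ↦ ?_⟩
  obtain ⟨B, hB⟩ := h (a / 2) (half_pos ha)
  filter_upwards [(tendsto_const_div_atTop_nhds_zero_nat B).eventually (gt_mem_nhds (half_pos ha)),
    eventually_gt_atTop 0] with k hBk hk
  have hk : (0 : ℝ) < k := mod_cast hk
  calc u k / k ≤ (a / 2 * k + B) / k := by gcongr; exact hB k
    _ = a / 2 + B / k := by field_simp
    _ < a := by linarith

theorem Real.log_div_rpow_le {y x : ℝ} (hy : 0 < y) (hx : 1 < x) :
    Real.log y / y ^ x ≤ (x - 1)⁻¹ * y⁻¹ := by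
  have hyx : 0 < y ^ x := Real.rpow_pos_of_pos hy x
  have hlog := Real.log_le_rpow_div hy.le (sub_pos.2 hx)
  rw [Real.rpow_sub_one hy.ne'] at hlog
  rw [div_le_iff₀ hyx]
  calc Real.log y ≤ y ^ x / y / (x - 1) := hlog
    _ = (x - 1)⁻¹ * y⁻¹ * y ^ x := by ring

namespace ArithmeticFunction.vonMangoldt

variable {q : ℕ} {a : ZMod q}

theorem residueClass_div_rpow_le_self {x : ℝ} (hx : 0 ≤ x) (n : ℕ) :
    residueClass a n / (n : ℝ) ^ x ≤ residueClass a n := by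
  rcases n.eq_zero_or_pos with rfl | hn
  · simp
  · exact div_le_self (residueClass_nonneg a n) (Real.one_le_rpow (mod_cast hn) hx)

theorem residueClass_div_rpow_le {x : ℝ} (hx : 1 < x) (n : ℕ) :
    residueClass a n / (n : ℝ) ^ x ≤ (if n.Prime then 0 else residueClass a n) / n +
      (x - 1)⁻¹ * if n.Prime ∧ (n : ZMod q) = a then (n : ℝ)⁻¹ else 0 := by
  rcases n.eq_zero_or_pos with rfl | hn
  · simp
  by_cases hp : n.Prime
  · by_cases ha : (n : ZMod q) = a
    · have hR : residueClass a n = Real.log n := by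
        simp [residueClass, ha, vonMangoldt_apply_prime hp]
      rw [hR]
      simpa [hp, ha] using Real.log_div_rpow_le (y := n) (mod_cast hn) hx
    · simp [hp, ha, residueClass]
  · simp only [hp, if_false, false_and, mul_zero, add_zero]
    exact div_le_div_of_nonneg_left (residueClass_nonneg a n) (mod_cast hn)
      (Real.self_le_rpow_of_one_le (mod_cast hn) hx.le)

/-- Beyond a point where the tail of `∑ 1 / p` is below `ε`, use
`log p / p ^ x ≤ 1 / ((x - 1) p)`. -/
theorem exists_tsum_residueClass_div_rpow_le
    (hu : Summable fun n : ℕ ↦ if n.Prime ∧ (n : ZMod q) = a then (n : ℝ)⁻¹ else 0)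
    {ε : ℝ} (hε : 0 < ε) :
    ∃ D, ∀ x : ℝ, 1 < x → ∑' n, residueClass a n / (n : ℝ) ^ x ≤ D + ε / (x - 1) := by
  set u := fun n : ℕ ↦ if n.Prime ∧ (n : ZMod q) = a then (n : ℝ)⁻¹ else 0
  set g := fun n : ℕ ↦ (if n.Prime then 0 else residueClass a n) / n
  obtain ⟨N, hN⟩ := ((tendsto_sum_nat_add u).eventually (ge_mem_nhds hε)).exists
  have hg : Summable fun k ↦ g (k + N) :=
    (summable_nat_add_iff N).2 (summable_residueClass_non_primes_div a)
  have hu' : Summable fun k ↦ u (k + N) := (summable_nat_add_iff N).2 hu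
  refine ⟨∑ n ∈ range N, residueClass a n + ∑' k, g (k + N), fun x hx ↦ ?_⟩
  have hsum : Summable fun n : ℕ ↦ residueClass a n / (n : ℝ) ^ x :=
    LSeries.summable_real_of_abscissaOfAbsConv_lt
      ((abscissaOfAbsConv_residueClass_le_one a).trans_lt (mod_cast hx))
  rw [← hsum.sum_add_tsum_nat_add N]
  calc ∑ n ∈ range N, residueClass a n / (n : ℝ) ^ x + ∑' k, residueClass a (k + N) / ↑(k + N) ^ x
      ≤ ∑ n ∈ range N, residueClass a n + ∑' k, (g (k + N) + (x - 1)⁻¹ * u (k + N)) := by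
        gcongr with n _ k
        · exact residueClass_div_rpow_le_self (by linarith) n
        · exact (summable_nat_add_iff N).2 hsum
        · exact hg.add (hu'.mul_left _)
        · exact residueClass_div_rpow_le hx (k + N)
    _ ≤ ∑ n ∈ range N, residueClass a n + ∑' k, g (k + N) + ε / (x - 1) := by
        rw [hg.tsum_add (hu'.mul_left _), tsum_mul_left, ← add_assoc, div_eq_inv_mul]
        gcongr

theorem not_summable_inv_prime_eq_mod [NeZero q] (ha : IsUnit a) :
    ¬ Summable fun n : ℕ ↦ if n.Prime ∧ (n : ZMod q) = a then (n : ℝ)⁻¹ else 0 := by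
  intro hu
  set c : ℝ := (q.totient : ℝ)⁻¹ / 2
  have hc : 0 < c := by have := q.totient.pos_of_neZero; positivity
  obtain ⟨C, hC⟩ := LSeries_residueClass_lower_bound ha
  obtain ⟨D, hD⟩ := exists_tsum_residueClass_div_rpow_le hu hc
  have key : ∀ x ∈ Set.Ioc (1 : ℝ) 2, c / (x - 1) ≤ C + D := fun x hx ↦ by
    have h := (hC hx).trans (hD x hx.1)
    rw [show (q.totient : ℝ)⁻¹ / (x - 1) = c / (x - 1) + c / (x - 1) by ring] at h
    linarith
  set B := |C + D| + c
  have hB : 0 < B := by positivity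
  have hcB : c / B ≤ 1 := (div_le_one hB).2 (by simp [B])
  have h := key (1 + c / B) ⟨by simp [div_pos hc hB], by linarith⟩
  rw [add_sub_cancel_left, div_div_cancel₀ hc.ne'] at h
  linarith [le_abs_self (C + D)]

theorem exists_le_sum_inv_prime_eq_mod [NeZero q] (ha : IsUnit a) (B : ℝ) :
    ∃ P : Finset ℕ, (∀ p ∈ P, p.Prime ∧ (p : ZMod q) = a) ∧ B ≤ ∑ p ∈ P, (p : ℝ)⁻¹ := by
  have h := (not_summable_iff_tendsto_nat_atTop_of_nonneg fun n ↦ by positivity).1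
    (not_summable_inv_prime_eq_mod ha)
  obtain ⟨N, hN⟩ := (h.eventually_ge_atTop B).exists
  exact ⟨{n ∈ range N | n.Prime ∧ (n : ZMod q) = a}, fun p hp ↦ (mem_filter.1 hp).2,
    by rwa [sum_filter]⟩

end ArithmeticFunction.vonMangoldt

theorem Nat.totient_prod_le_mul_exp {P : Finset ℕ} (hP : ∀ p ∈ P, p.Prime) :
    ((∏ p ∈ P, p).totient : ℝ) ≤ (∏ p ∈ P, p : ℕ) * Real.exp (-∑ p ∈ P, (p : ℝ)⁻¹) := by
  have hφ : ((∏ p ∈ P, p).totient : ℝ) = (∏ p ∈ P, p : ℕ) * ∏ p ∈ P, (1 - (p : ℝ)⁻¹) := by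
    have := Nat.totient_eq_mul_prod_factors (∏ p ∈ P, p)
    rw [Nat.primeFactors_prod hP] at this
    have := congrArg ((↑) : ℚ → ℝ) this
    push_cast at this
    rwa [Nat.cast_prod]
  rw [hφ, ← sum_neg_distrib, Real.exp_sum]
  gcongr _ * ?_
  refine prod_le_prod (fun p hp ↦ ?_) fun p _ ↦ Real.one_sub_le_exp_neg _
  exact sub_nonneg.2 (inv_le_one_of_one_le₀ (mod_cast (hP p hp).one_le))

theorem exists_totient_prod_le_mul {q : ℕ} [NeZero q] {a : ZMod q} (ha : IsUnit a) {ε : ℝ}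
    (hε : 0 < ε) : ∃ P : Finset ℕ, (∀ p ∈ P, p.Prime ∧ (p : ZMod q) = a) ∧
      ((∏ p ∈ P, p).totient : ℝ) ≤ ε * (∏ p ∈ P, p : ℕ) := by
  obtain ⟨P, hP, hsum⟩ := ArithmeticFunction.vonMangoldt.exists_le_sum_inv_prime_eq_mod ha
    (-Real.log ε)
  refine ⟨P, hP, (Nat.totient_prod_le_mul_exp fun p hp ↦ (hP p hp).1).trans ?_⟩
  rw [mul_comm ε]
  gcongr
  calc Real.exp (-∑ p ∈ P, (p : ℝ)⁻¹) ≤ Real.exp (Real.log ε) := by gcongr; linarith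
    _ = ε := Real.exp_log hε

/-- The set `C_3` of coordinates of 3-color fair games has natural density zero. -/
theorem stmt_15 :
    Tendsto (fun k : ℕ => (({c ∈ C3 | c ≤ k}).ncard : ℝ) / k) atTop (nhds 0) := by
  refine tendsto_div_atTop_zero_of_le_mul_add (fun k ↦ Nat.cast_nonneg _) fun ε hε ↦ ?_
  obtain ⟨P, hP, hφ⟩ := exists_totient_prod_le_mul (a := (2 : ZMod 3)) (by decide) (half_pos hε)
  set M := ∏ p ∈ P, p
  have hM : (0 : ℝ) < M := mod_cast prod_pos fun p hp ↦ (hP p hp).1.pos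
  refine ⟨ε + M.totient, fun k ↦ ?_⟩
  calc ({c ∈ C3 | c ≤ k}.ncard : ℝ) ≤ M.totient * (((2 * k + 2) / M : ℕ) + 1 : ℕ) :=
        mod_cast ncard_C3_le hP k
    _ ≤ M.totient * ((2 * k + 2) / M + 1) := by
        push_cast
        gcongr
        exact_mod_cast Nat.cast_div_le
    _ = M.totient / M * (2 * (k + 1)) + M.totient := by field_simp
    _ ≤ ε / 2 * (2 * (k + 1)) + M.totient := by
        gcongr ?_ * _ + _
        exact (div_le_iff₀ hM).2 hφ
    _ = ε * k + (ε + M.totient) := by ring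
end
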